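/- Let c be a natural number and let w₁, w₂ be Gauss words of length 2c. Suppose the multiset (over all 2^c assignments x) of warping degree sequences of w₁ equals the multiset of warping degree sequences of w₂. Then w₁ and w₂ induce the same pairing of positions: for all j, j' : Fin (2c), w₁ j = w₁ j' if and only if w₂ j = w₂ j'. In other words, a warping matrix of an oriented knot projection determines the Gauss diagram of the projection uniquely. -/

import Mathlib

namespace Warping

/-- A Gauss word of length `2c`: every letter occurs at exactly two positions. -/
def IsGaussWord (c : ℕ) (w : Fin (2*c) → Fin c) : Prop :=
  ∀ i : Fin c, (Finset.univ.filter (fun j => w j = i)).card = 2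

/-- The cyclic successor of an index. -/
def next {n : ℕ} (b : Fin n) : Fin n :=
  ⟨((b : ℕ) + 1) % n, Nat.mod_lt _ (Nat.lt_of_le_of_lt (Nat.zero_le _) b.isLt)⟩

/-- `j` is the first (smaller) of the two positions of its letter. -/
def isFirst (c : ℕ) (w : Fin (2*c) → Fin c) (j : Fin (2*c)) : Prop :=
  ∀ j' : Fin (2*c), w j' = w j → j ≤ j'

/-- Under the assignment `x`, position `j` is passed under. -/
def passedUnder (c : ℕ) (w : Fin (2*c) → Fin c) (x : Fin c → Bool) (j : Fin (2*c)) : Prop :=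
  (x (w j) = true) ↔ isFirst c w j

/-- Time at which position `j` is met in the cyclic traversal starting at base `b`. -/
def time (c : ℕ) (b j : Fin (2*c)) : ℕ := ((j : ℕ) + 2*c - (b : ℕ)) % (2*c)

/-- The letter `i` is a warping crossing for assignment `x` and base `b`: the position of `i`
met earlier in the cyclic traversal starting at `b` is passed under. -/
def IsWarpingCrossing (c : ℕ) (w : Fin (2*c) → Fin c) (x : Fin c → Bool)
    (b : Fin (2*c)) (i : Fin c) : Prop :=
  ∃ j : Fin (2*c), w j = i ∧ (∀ j' : Fin (2*c), w j' = i → time c b j ≤ time c b j') ∧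
    passedUnder c w x j

open scoped Classical in
/-- The warping degree of the assignment `x` with base point `b`. -/
noncomputable def warpingDegree (c : ℕ) (w : Fin (2*c) → Fin c) (x : Fin c → Bool)
    (b : Fin (2*c)) : ℕ :=
  (Finset.univ.filter (fun i => IsWarpingCrossing c w x b i)).card

/-- The step `d_{b+1}(x) - d_b(x)` of the warping degree sequence. -/
noncomputable def step (c : ℕ) (w : Fin (2*c) → Fin c) (x : Fin c → Bool) (b : Fin (2*c)) : ℤ :=
  (warpingDegree c w x (next b) : ℤ) - (warpingDegree c w x b : ℤ)

/-!
Moving the base point from `b` to `b + 1` changes the earlier-met position of the letter at `b`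
only: before the move it is `b` itself, afterwards it is the other position `q` of that letter.
Since exactly one of `b`, `q` is passed under, `d_{b+1}(x) < d_b(x)` holds exactly when `b` is
passed under. So each warping degree sequence records the set of positions passed under by its
assignment. Two distinct positions carry the same letter iff no assignment passes under both of
them (for distinct letters one can choose the two over/under data independently), and this
condition depends only on the set of warping degree sequences.
-/

section Time

variable {c : ℕ}

lemma time_eq (b j : Fin (2*c)) :
    time c b j = if (b : ℕ) ≤ j then (j : ℕ) - b else (j : ℕ) + 2*c - b := by
  have hj := j.isLt
  unfold time
  split_ifs with h
  · rw [show (j : ℕ) + 2*c - b = (j - b) + 2*c by omega, Nat.add_mod_right,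
      Nat.mod_eq_of_lt (by omega)]
  · exact Nat.mod_eq_of_lt (by omega)

lemma next_val (b : Fin (2*c)) :
    ((next b : Fin (2*c)) : ℕ) = if (b : ℕ) + 1 < 2*c then (b : ℕ) + 1 else 0 := by
  have hb := b.isLt
  change ((b : ℕ) + 1) % (2*c) = _
  split_ifs with h
  · exact Nat.mod_eq_of_lt h
  · rw [show (b : ℕ) + 1 = 2*c by omega, Nat.mod_self]

lemma time_self (b : Fin (2*c)) : time c b b = 0 := by
  simp [time_eq]

lemma time_pos {b j : Fin (2*c)} (h : j ≠ b) : 0 < time c b j := by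
  have := Fin.val_ne_of_ne h
  rw [time_eq]
  split_ifs <;> omega

lemma time_eq_time_next_add_one {b j : Fin (2*c)} (h : j ≠ b) :
    time c b j = time c (next b) j + 1 := by
  have := Fin.val_ne_of_ne h
  have hj := j.isLt
  rw [time_eq, time_eq, next_val]
  split_ifs <;> omega

lemma time_next_lt_time_next_self {b j : Fin (2*c)} (h : j ≠ b) :
    time c (next b) j < time c (next b) b := by
  have := Fin.val_ne_of_ne h
  have hj := j.isLt
  have hb := b.isLt
  rw [time_eq, time_eq, next_val]
  split_ifs <;> omega

end Time

section GaussWord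

variable {c : ℕ} {w : Fin (2*c) → Fin c}

lemma IsGaussWord.exists_partner (hw : IsGaussWord c w) (b : Fin (2*c)) :
    ∃ q, q ≠ b ∧ ∀ k, w k = w b ↔ k = b ∨ k = q := by
  classical
  obtain ⟨p, q, hpq, hset⟩ := Finset.card_eq_two.mp (hw (w b))
  have hpos : ∀ k, w k = w b ↔ k = p ∨ k = q := fun k => by
    simpa using Finset.ext_iff.mp hset k
  rcases (hpos b).mp rfl with rfl | rfl
  · exact ⟨q, hpq.symm, hpos⟩
  · exact ⟨p, hpq, fun k => (hpos k).trans or_comm⟩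

lemma IsGaussWord.eq_iff_eq_or_eq (hw : IsGaussWord c w) {j j' : Fin (2*c)} (hne : j ≠ j')
    (hjj : w j = w j') (k : Fin (2*c)) : w k = w j ↔ k = j ∨ k = j' := by
  obtain ⟨q, -, hpos⟩ := hw.exists_partner j
  obtain rfl : j' = q := ((hpos j').mp hjj.symm).resolve_left hne.symm
  exact hpos k

lemma IsGaussWord.isFirst_iff_le (hw : IsGaussWord c w) {j j' : Fin (2*c)} (hne : j ≠ j')
    (hjj : w j = w j') : isFirst c w j ↔ j ≤ j' := by
  refine ⟨fun hf => hf j' hjj.symm, fun hle k hk => ?_⟩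
  rcases (hw.eq_iff_eq_or_eq hne hjj k).mp hk with rfl | rfl
  exacts [le_rfl, hle]

lemma IsGaussWord.passedUnder_iff_not (hw : IsGaussWord c w) {j j' : Fin (2*c)} (hne : j ≠ j')
    (hjj : w j = w j') (x : Fin c → Bool) :
    passedUnder c w x j ↔ ¬ passedUnder c w x j' := by
  have hlt : j ≤ j' ↔ ¬ j' ≤ j := by
    have := Fin.val_ne_of_ne hne
    rw [Fin.le_def, Fin.le_def]; omega
  unfold passedUnder
  rw [hw.isFirst_iff_le hne hjj, hw.isFirst_iff_le hne.symm hjj.symm, hjj, hlt]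
  tauto

lemma IsGaussWord.eq_iff_forall_not_passedUnder (hw : IsGaussWord c w) {j j' : Fin (2*c)}
    (hne : j ≠ j') : w j = w j' ↔ ∀ x, ¬ (passedUnder c w x j ∧ passedUnder c w x j') := by
  classical
  refine ⟨fun hjj x hu => (hw.passedUnder_iff_not hne hjj x).mp hu.1 hu.2, fun hall => ?_⟩
  by_contra hne'
  refine hall (fun i => if i = w j then decide (isFirst c w j) else decide (isFirst c w j'))
    ⟨?_, ?_⟩ <;> simp [passedUnder, Ne.symm hne']

end GaussWord

lemma _root_.Finset.card_filter_lt_card_filter_iff {α : Type*} [Fintype α] {P Q : α → Prop}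
    [DecidablePred P] [DecidablePred Q] (a : α) (h : ∀ i, i ≠ a → (P i ↔ Q i)) :
    (Finset.univ.filter P).card < (Finset.univ.filter Q).card ↔ ¬ P a ∧ Q a := by
  classical
  simp only [Finset.card_filter]
  rw [← Finset.sum_erase_add _ _ (Finset.mem_univ a),
    ← Finset.sum_erase_add _ (fun i => if Q i then 1 else 0) (Finset.mem_univ a),
    Finset.sum_congr rfl fun i hi => if_congr (h i (Finset.ne_of_mem_erase hi)) rfl rfl]
  split_ifs <;> simp_all

section WarpingDegree

variable {c : ℕ} {w : Fin (2*c) → Fin c}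

lemma isWarpingCrossing_iff_of_time_lt (x : Fin c → Bool) {b p q : Fin (2*c)} {i : Fin c}
    (hpos : ∀ k, w k = i ↔ k = p ∨ k = q) (ht : time c b p < time c b q) :
    IsWarpingCrossing c w x b i ↔ passedUnder c w x p := by
  constructor
  · rintro ⟨j, hj, hmin, hu⟩
    rcases (hpos j).mp hj with rfl | rfl
    · exact hu
    · exact absurd (hmin p ((hpos p).mpr (.inl rfl))) (by omega)
  · refine fun hu => ⟨p, (hpos p).mpr (.inl rfl), fun k hk => ?_, hu⟩
    rcases (hpos k).mp hk with rfl | rfl <;> omega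

lemma isWarpingCrossing_next_iff_of_ne (x : Fin c → Bool) {b : Fin (2*c)} {i : Fin c}
    (hi : i ≠ w b) : IsWarpingCrossing c w x (next b) i ↔ IsWarpingCrossing c w x b i := by
  have hne : ∀ k, w k = i → k ≠ b := fun k hk hkb => hi (hkb ▸ hk).symm
  refine exists_congr fun j => and_congr_right fun hj => and_congr_left fun _ =>
    forall_congr' fun j' => imp_congr_right fun hj' => ?_
  rw [time_eq_time_next_add_one (hne j hj), time_eq_time_next_add_one (hne j' hj')]
  omega

theorem IsGaussWord.warpingDegree_next_lt_iff (hw : IsGaussWord c w) (x : Fin c → Bool)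
    (b : Fin (2*c)) :
    warpingDegree c w x (next b) < warpingDegree c w x b ↔ passedUnder c w x b := by
  classical
  obtain ⟨q, hqb, hpos⟩ := hw.exists_partner b
  have hb : IsWarpingCrossing c w x b (w b) ↔ passedUnder c w x b :=
    isWarpingCrossing_iff_of_time_lt x hpos (by rw [time_self]; exact time_pos hqb)
  have hq : IsWarpingCrossing c w x (next b) (w b) ↔ passedUnder c w x q :=
    isWarpingCrossing_iff_of_time_lt x (fun k => (hpos k).trans or_comm)
      (time_next_lt_time_next_self hqb)
  rw [warpingDegree, warpingDegree, Finset.card_filter_lt_card_filter_iff (w b)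
    fun i hi => isWarpingCrossing_next_iff_of_ne x hi, hb, hq,
    hw.passedUnder_iff_not hqb ((hpos q).mpr (.inr rfl)) x]
  tauto

lemma IsGaussWord.eq_iff_forall_warpingDegree (hw : IsGaussWord c w) {j j' : Fin (2*c)}
    (hne : j ≠ j') :
    w j = w j' ↔ ∀ d ∈ Multiset.map (fun x : Fin c → Bool => fun b => warpingDegree c w x b)
      (Finset.univ : Finset (Fin c → Bool)).val, ¬ (d (next j) < d j ∧ d (next j') < d j') := by
  simp only [Multiset.forall_mem_map_iff, Finset.mem_val, Finset.mem_univ, true_implies,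
    hw.warpingDegree_next_lt_iff]
  exact hw.eq_iff_forall_not_passedUnder hne

end WarpingDegree

/-- A warping matrix of an oriented knot projection determines the Gauss diagram of the
projection uniquely: if two Gauss words have the same multiset of warping degree sequences,
they induce the same pairing of positions. -/
theorem gaussDiagram_of_warpingMatrix (c : ℕ) (w₁ w₂ : Fin (2*c) → Fin c)
    (h₁ : IsGaussWord c w₁) (h₂ : IsGaussWord c w₂)
    (h : Multiset.map (fun x : Fin c → Bool => fun b => warpingDegree c w₁ x b)
          (Finset.univ : Finset (Fin c → Bool)).val =
         Multiset.map (fun x : Fin c → Bool => fun b => warpingDegree c w₂ x b)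
          (Finset.univ : Finset (Fin c → Bool)).val) :
    ∀ j j' : Fin (2*c), w₁ j = w₁ j' ↔ w₂ j = w₂ j' := by
  intro j j'
  rcases eq_or_ne j j' with rfl | hne
  · simp
  rw [h₁.eq_iff_forall_warpingDegree hne, h₂.eq_iff_forall_warpingDegree hne, h]

end Warping
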